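/- For any A, B in the semigroup S of nonnegative matrices with columns containing positive entries, defining [A] := sup{d(A·x, A·y) : x, y ∈ X}, one has the submultiplicativity [AB] ≤ [A]·[B] and the contraction property d(A·x, A·y) ≤ [A]·d(x,y) for all x, y ∈ X. -/

import Mathlib

open Matrix BigOperators

/-- The ℓ¹ norm on `ℝ^d`. -/
def l1 {d : ℕ} (x : Fin d → ℝ) : ℝ := ∑ i, |x i|

/-- The semigroup `S` of nonnegative matrices each of whose columns contains a
positive entry. -/
def memS {d : ℕ} (A : Matrix (Fin d) (Fin d) ℝ) : Prop :=
  (∀ i j, 0 ≤ A i j) ∧ ∀ j, ∃ i, 0 < A i j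

/-- `m(x,y) = min { x_i / y_i : y_i > 0 }`. -/
noncomputable def mfun {d : ℕ} (x y : Fin d → ℝ) : ℝ :=
  ⨅ i : {i : Fin d // 0 < y i}, x i / y i

/-- The projective (Hilbert-type) distance on the simplex. -/
noncomputable def dH {d : ℕ} (x y : Fin d → ℝ) : ℝ :=
  (1 - mfun x y * mfun y x) / (1 + mfun x y * mfun y x)

/-- The projective action `A · x = Ax / |Ax|`. -/
noncomputable def projAct {d : ℕ} (A : Matrix (Fin d) (Fin d) ℝ) (x : Fin d → ℝ) :
    Fin d → ℝ :=
  (l1 (A.mulVec x))⁻¹ • A.mulVec x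

/-- The contraction coefficient `[A] = sup { d(A·x, A·y) : x, y ∈ X }`. -/
noncomputable def contrCoef {d : ℕ} (A : Matrix (Fin d) (Fin d) ℝ) : ℝ :=
  sSup {r : ℝ | ∃ x y : Fin d → ℝ, (∀ i, 0 ≤ x i) ∧ (∑ i, x i) = 1 ∧
    (∀ i, 0 ≤ y i) ∧ (∑ i, y i) = 1 ∧ r = dH (projAct A x) (projAct A y)}


/-!
Birkhoff's contraction argument. For `x ≠ y` in the simplex let `a = m(x,y)`, `b = m(y,x)`; then
`u = x - a y` and `v = y - b x` are nonnegative and nonzero, and `(1 - ab) x = u + a v`,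
`(1 - ab) y = b u + v`. As `d` is invariant under positive rescaling,
`d(A·x, A·y) = d(Au + a Av, b Au + Av)`, and the bounds `m(Au + a Av, b Au + Av) ≥ (M + a)/(bM + 1)`
with `M = m(Au, Av)` (and symmetrically) give
`d(A·x, A·y) ≤ (1 - ab)/(1 + ab) · d(A·u, A·v) = d(x,y) · d(A·u, A·v) ≤ [A] d(x,y)`.
Submultiplicativity follows by applying this to `B·x`, `B·y`, since `(AB)·x = A·(B·x)`.
-/

open Finset

theorem exists_pos_of_sum_pos {ι : Type*} [Fintype ι] {w : ι → ℝ} (h : 0 < ∑ i, w i) :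
    ∃ i, 0 < w i :=
  exists_lt_of_sum_lt (s := univ) (f := 0) (by simpa using h) |>.imp fun _ h => h.2

theorem exists_pos_of_mem_stdSimplex {ι : Type*} [Fintype ι] {x : ι → ℝ}
    (hx : x ∈ stdSimplex ℝ ι) : ∃ i, 0 < x i :=
  exists_pos_of_sum_pos (hx.2 ▸ one_pos)

theorem inv_sum_smul_mem_stdSimplex {ι : Type*} [Fintype ι] {w : ι → ℝ} (hw : ∀ i, 0 ≤ w i)
    (hs : 0 < ∑ i, w i) : (∑ i, w i)⁻¹ • w ∈ stdSimplex ℝ ι := by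
  refine ⟨fun i => mul_nonneg (inv_nonneg.2 hs.le) (hw i), ?_⟩
  simp only [Pi.smul_apply, smul_eq_mul, ← mul_sum, inv_mul_cancel₀ hs.ne']

variable {d : ℕ}

section mfun

variable {x y : Fin d → ℝ}

theorem mfun_nonneg (hx : ∀ i, 0 ≤ x i) (hy : ∀ i, 0 ≤ y i) : 0 ≤ mfun x y :=
  Real.iInf_nonneg fun i => div_nonneg (hx i) (hy i)

theorem le_mfun {c : ℝ} (hy : ∃ i, 0 < y i) (h : ∀ i, 0 < y i → c ≤ x i / y i) :
    c ≤ mfun x y :=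
  have : Nonempty {i // 0 < y i} := let ⟨i, hi⟩ := hy; ⟨⟨i, hi⟩⟩
  le_ciInf fun i => h i i.2

theorem mfun_mul_le (hx : ∀ i, 0 ≤ x i) (hy : ∀ i, 0 ≤ y i) (i : Fin d) :
    mfun x y * y i ≤ x i := by
  rcases (hy i).eq_or_lt with hi | hi
  · rw [← hi, mul_zero]
    exact hx i
  · have hbdd : BddBelow (Set.range fun j : {j // 0 < y j} => x j / y j) :=
      ⟨0, by rintro r ⟨j, rfl⟩; exact div_nonneg (hx j) (hy j)⟩
    exact (le_div_iff₀ hi).1 (ciInf_le hbdd ⟨i, hi⟩)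

theorem mfun_self (hx : ∃ i, 0 < x i) : mfun x x = 1 := by
  obtain ⟨i, hi⟩ := hx
  have : Nonempty {i // 0 < x i} := ⟨⟨i, hi⟩⟩
  simp only [mfun]
  rw [iInf_congr fun j : {j // 0 < x j} => div_self j.2.ne', ciInf_const]

theorem mfun_smul {c c' : ℝ} (hc : 0 ≤ c) (hc' : 0 < c') :
    mfun (c • x) (c' • y) = c / c' * mfun x y := by
  rw [mfun, mfun, Real.mul_iInf_of_nonneg (div_nonneg hc hc'.le)]
  refine Equiv.iInf_congr (Equiv.subtypeEquivRight fun i => ?_) fun i => ?_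
  · simp [hc']
  · simp only [Equiv.subtypeEquivRight_apply_coe, Pi.smul_apply, smul_eq_mul]
    field_simp

theorem mfun_mul_mfun_le_one (hx : ∀ i, 0 ≤ x i) (hy : ∀ i, 0 ≤ y i) :
    mfun x y * mfun y x ≤ 1 := by
  by_cases h : ∃ i, 0 < x i
  · obtain ⟨i, hi⟩ := h
    have := mfun_mul_le hx hy i
    have := mfun_mul_le hy hx i
    have := mfun_nonneg hx hy
    nlinarith
  · have : IsEmpty {i // 0 < x i} := ⟨fun i => h ⟨i, i.2⟩⟩
    simp [mfun]

theorem mfun_lt_one (hx : x ∈ stdSimplex ℝ (Fin d)) (hy : y ∈ stdSimplex ℝ (Fin d))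
    (hxy : x ≠ y) : mfun x y < 1 := by
  by_contra! h
  have hle : ∀ i ∈ univ, y i ≤ x i := fun i _ =>
    (le_mul_of_one_le_left (hy.1 i) h).trans (mfun_mul_le hx.1 hy.1 i)
  have heq := (sum_eq_sum_iff_of_le hle).1 (hy.2.trans hx.2.symm)
  exact hxy (funext fun i => (heq i (mem_univ i)).symm)

theorem sub_mfun_smul_nonneg (hx : ∀ i, 0 ≤ x i) (hy : ∀ i, 0 ≤ y i) (i : Fin d) :
    0 ≤ (x - mfun x y • y) i :=
  sub_nonneg.2 (mfun_mul_le hx hy i)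

theorem sum_sub_mfun_smul_pos (hx : x ∈ stdSimplex ℝ (Fin d)) (hy : y ∈ stdSimplex ℝ (Fin d))
    (hxy : x ≠ y) : 0 < ∑ i, (x - mfun x y • y) i := by
  simp only [Pi.sub_apply, Pi.smul_apply, smul_eq_mul, sum_sub_distrib, ← mul_sum, hx.2, hy.2]
  linarith [mfun_lt_one hx hy hxy]

end mfun

section dH

variable {x y : Fin d → ℝ}

theorem dH_self (hx : ∃ i, 0 < x i) : dH x x = 0 := by
  simp [dH, mfun_self hx]

theorem dH_nonneg (hx : ∀ i, 0 ≤ x i) (hy : ∀ i, 0 ≤ y i) : 0 ≤ dH x y := by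
  have := mfun_mul_mfun_le_one hx hy
  have := mul_nonneg (mfun_nonneg hx hy) (mfun_nonneg hy hx)
  exact div_nonneg (by linarith) (by linarith)

theorem dH_le_one (hx : ∀ i, 0 ≤ x i) (hy : ∀ i, 0 ≤ y i) : dH x y ≤ 1 := by
  have := mul_nonneg (mfun_nonneg hx hy) (mfun_nonneg hy hx)
  exact (div_le_one (by linarith)).2 (by linarith)

theorem dH_smul {c c' : ℝ} (hc : 0 < c) (hc' : 0 < c') : dH (c • x) (c' • y) = dH x y := by
  have h : mfun (c • x) (c' • y) * mfun (c' • y) (c • x) = mfun x y * mfun y x := by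
    rw [mfun_smul hc.le hc', mfun_smul hc'.le hc]
    field_simp
  rw [dH, dH, h]

end dH

theorem l1_smul (c : ℝ) (x : Fin d → ℝ) : l1 (c • x) = |c| * l1 x := by
  simp [l1, abs_mul, mul_sum]

theorem l1_pos {x : Fin d → ℝ} (hx : x ≠ 0) : 0 < l1 x := by
  obtain ⟨i, hi⟩ := Function.ne_iff.1 hx
  exact sum_pos' (fun j _ => abs_nonneg (x j)) ⟨i, mem_univ i, abs_pos.2 hi⟩

theorem l1_of_nonneg {x : Fin d → ℝ} (hx : ∀ i, 0 ≤ x i) : l1 x = ∑ i, x i :=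
  sum_congr rfl fun i _ => abs_of_nonneg (hx i)

section projAct

variable {A : Matrix (Fin d) (Fin d) ℝ}

theorem mulVec_nonneg_of_nonneg (hA : ∀ i j, 0 ≤ A i j) {x : Fin d → ℝ} (hx : ∀ i, 0 ≤ x i)
    (i : Fin d) : 0 ≤ (A *ᵥ x) i :=
  dotProduct_nonneg_of_nonneg (fun j => hA i j) hx

theorem exists_mulVec_pos (hA : memS A) {x : Fin d → ℝ} (hx : ∀ i, 0 ≤ x i)
    (hx' : ∃ j, 0 < x j) : ∃ i, 0 < (A *ᵥ x) i := by
  obtain ⟨j, hj⟩ := hx'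
  obtain ⟨i, hi⟩ := hA.2 j
  exact ⟨i, sum_pos' (fun k _ => mul_nonneg (hA.1 i k) (hx k)) ⟨j, mem_univ j, mul_pos hi hj⟩⟩

theorem projAct_nonneg (hA : ∀ i j, 0 ≤ A i j) {x : Fin d → ℝ} (hx : ∀ i, 0 ≤ x i)
    (i : Fin d) : 0 ≤ projAct A x i :=
  mul_nonneg (inv_nonneg.2 (sum_nonneg fun _ _ => abs_nonneg _))
    (mulVec_nonneg_of_nonneg hA hx i)

theorem projAct_mem_stdSimplex (hA : memS A) {x : Fin d → ℝ} (hx : x ∈ stdSimplex ℝ (Fin d)) :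
    projAct A x ∈ stdSimplex ℝ (Fin d) := by
  have hAx := mulVec_nonneg_of_nonneg hA.1 hx.1
  obtain ⟨i, hi⟩ := exists_mulVec_pos hA hx.1 (exists_pos_of_mem_stdSimplex hx)
  rw [projAct, l1_of_nonneg hAx]
  exact inv_sum_smul_mem_stdSimplex hAx (sum_pos' (fun j _ => hAx j) ⟨i, mem_univ i, hi⟩)

theorem projAct_smul {c : ℝ} (hc : 0 < c) (x : Fin d → ℝ) : projAct A (c • x) = projAct A x := by
  rw [projAct, projAct, mulVec_smul, l1_smul, abs_of_pos hc, smul_smul, mul_inv, mul_right_comm,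
    inv_mul_cancel₀ hc.ne', one_mul]

-- When `A *ᵥ x = 0` the junk value `0⁻¹ = 0` makes `projAct A x = 0`, so any `c` works.
theorem exists_pos_projAct_eq_smul (A : Matrix (Fin d) (Fin d) ℝ) (x : Fin d → ℝ) :
    ∃ c : ℝ, 0 < c ∧ projAct A x = c • (A *ᵥ x) := by
  by_cases h : A *ᵥ x = 0
  · exact ⟨1, one_pos, by simp [projAct, h]⟩
  · exact ⟨_, inv_pos.2 (l1_pos h), rfl⟩

theorem projAct_mul (A B : Matrix (Fin d) (Fin d) ℝ) (x : Fin d → ℝ) :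
    projAct (A * B) x = projAct A (projAct B x) := by
  obtain ⟨c, hc, h⟩ := exists_pos_projAct_eq_smul B x
  rw [h, projAct_smul hc, projAct, projAct, mulVec_mulVec]

theorem dH_projAct (A : Matrix (Fin d) (Fin d) ℝ) (x y : Fin d → ℝ) :
    dH (projAct A x) (projAct A y) = dH (A *ᵥ x) (A *ᵥ y) := by
  obtain ⟨c, hc, hx⟩ := exists_pos_projAct_eq_smul A x
  obtain ⟨c', hc', hy⟩ := exists_pos_projAct_eq_smul A y
  rw [hx, hy, dH_smul hc hc']

end projAct

theorem one_sub_div_one_add_le_mul {r s c P : ℝ} (hr : 0 ≤ r) (hr' : r ≤ 1) (hs : 0 ≤ s)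
    (hs' : s ≤ 1) (hc : 0 ≤ c) (hP : (r + s + c) / (1 + r * s + c) ≤ P) :
    (1 - P) / (1 + P) ≤ (1 - r) / (1 + r) * ((1 - s) / (1 + s)) := by
  set Q := (r + s + c) / (1 + r * s + c)
  have hQ : 0 ≤ Q := by positivity
  calc (1 - P) / (1 + P) ≤ (1 - Q) / (1 + Q) := by
        rw [div_le_div_iff₀ (by linarith) (by linarith)]
        nlinarith
    _ = (1 - r) * (1 - s) / ((1 + r) * (1 + s) + 2 * c) := by
        simp only [Q]
        field_simp
        ring
    _ ≤ (1 - r) * (1 - s) / ((1 + r) * (1 + s)) :=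
        div_le_div_of_nonneg_left (by nlinarith) (by positivity) (by linarith)
    _ = (1 - r) / (1 + r) * ((1 - s) / (1 + s)) := (div_mul_div_comm _ _ _ _).symm

section mfun_add_smul

variable {U V : Fin d → ℝ}

theorem div_le_mfun_add_smul (hU : ∀ i, 0 ≤ U i) (hV : ∀ i, 0 ≤ V i) (hV' : ∃ i, 0 < V i)
    {a b : ℝ} (hb : 0 ≤ b) (hab : a * b ≤ 1) :
    (mfun U V + a) / (b * mfun U V + 1) ≤ mfun (U + a • V) (b • U + V) := by
  have hM := mfun_nonneg hU hV
  obtain ⟨j, hj⟩ := hV'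
  refine le_mfun ⟨j, by simp only [Pi.add_apply, Pi.smul_apply, smul_eq_mul]; nlinarith [hU j]⟩
    fun i hi => ?_
  rw [div_le_div_iff₀ (by positivity) hi]
  simp only [Pi.add_apply, Pi.smul_apply, smul_eq_mul]
  linear_combination mul_nonneg (sub_nonneg.2 hab) (sub_nonneg.2 (mfun_mul_le hU hV i))

theorem dH_add_smul_le (hU : ∀ i, 0 ≤ U i) (hV : ∀ i, 0 ≤ V i) (hU' : ∃ i, 0 < U i)
    (hV' : ∃ i, 0 < V i) {a b : ℝ} (ha : 0 ≤ a) (hb : 0 ≤ b) (hab : a * b ≤ 1) :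
    dH (U + a • V) (b • U + V) ≤ (1 - a * b) / (1 + a * b) * dH U V := by
  set M := mfun U V
  set M' := mfun V U
  have hM : 0 ≤ M := mfun_nonneg hU hV
  have hM' : 0 ≤ M' := mfun_nonneg hV hU
  have h₁ := div_le_mfun_add_smul hU hV hV' hb hab
  have h₂ : (M' + b) / (a * M' + 1) ≤ mfun (b • U + V) (U + a • V) := by
    rw [add_comm (b • U), add_comm U]
    exact div_le_mfun_add_smul hV hU hU' ha (by linarith [mul_comm a b])
  refine one_sub_div_one_add_le_mul (mul_nonneg ha hb) hab (mul_nonneg hM hM')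
    (mfun_mul_mfun_le_one hU hV) (add_nonneg (mul_nonneg hb hM) (mul_nonneg ha hM')) ?_
  calc _ = (M + a) / (b * M + 1) * ((M' + b) / (a * M' + 1)) := by
        rw [div_mul_div_comm]
        congr 1 <;> ring
    _ ≤ _ := mul_le_mul h₁ h₂ (by positivity) ((by positivity : (0 : ℝ) ≤ _).trans h₁)

end mfun_add_smul

section contrCoef

variable {A : Matrix (Fin d) (Fin d) ℝ}

theorem contrCoef_nonneg (hA : ∀ i j, 0 ≤ A i j) : 0 ≤ contrCoef A :=
  Real.sSup_nonneg fun _ ⟨_, _, hx, _, hy, _, hr⟩ =>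
    hr ▸ dH_nonneg (projAct_nonneg hA hx) (projAct_nonneg hA hy)

theorem dH_projAct_le_contrCoef (hA : ∀ i j, 0 ≤ A i j) {x y : Fin d → ℝ}
    (hx : x ∈ stdSimplex ℝ (Fin d)) (hy : y ∈ stdSimplex ℝ (Fin d)) :
    dH (projAct A x) (projAct A y) ≤ contrCoef A := by
  refine le_csSup ⟨1, ?_⟩ ⟨x, y, hx.1, hx.2, hy.1, hy.2, rfl⟩
  rintro _ ⟨x', y', hx', -, hy', -, rfl⟩
  exact dH_le_one (projAct_nonneg hA hx') (projAct_nonneg hA hy')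

theorem dH_mulVec_le_contrCoef (hA : ∀ i j, 0 ≤ A i j) {u v : Fin d → ℝ} (hu : ∀ i, 0 ≤ u i)
    (hu' : 0 < ∑ i, u i) (hv : ∀ i, 0 ≤ v i) (hv' : 0 < ∑ i, v i) :
    dH (A *ᵥ u) (A *ᵥ v) ≤ contrCoef A := by
  have h := dH_projAct_le_contrCoef hA (inv_sum_smul_mem_stdSimplex hu hu')
    (inv_sum_smul_mem_stdSimplex hv hv')
  rwa [projAct_smul (inv_pos.2 hu'), projAct_smul (inv_pos.2 hv'), dH_projAct] at h

theorem dH_projAct_le_contrCoef_mul (hA : memS A) {x y : Fin d → ℝ}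
    (hx : x ∈ stdSimplex ℝ (Fin d)) (hy : y ∈ stdSimplex ℝ (Fin d)) :
    dH (projAct A x) (projAct A y) ≤ contrCoef A * dH x y := by
  rcases eq_or_ne x y with rfl | hxy
  · rw [dH_self (exists_pos_of_mem_stdSimplex (projAct_mem_stdSimplex hA hx)),
      dH_self (exists_pos_of_mem_stdSimplex hx), mul_zero]
  set a := mfun x y
  set b := mfun y x
  have hu := sub_mfun_smul_nonneg hx.1 hy.1
  have hv := sub_mfun_smul_nonneg hy.1 hx.1
  have hu' := sum_sub_mfun_smul_pos hx hy hxy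
  have hv' := sum_sub_mfun_smul_pos hy hx hxy.symm
  have ha : a < 1 := mfun_lt_one hx hy hxy
  have hb : b < 1 := mfun_lt_one hy hx hxy.symm
  have ha₀ : 0 ≤ a := mfun_nonneg hx.1 hy.1
  have hb₀ : 0 ≤ b := mfun_nonneg hy.1 hx.1
  have hab : a * b < 1 := by nlinarith
  calc dH (projAct A x) (projAct A y)
      = dH (A *ᵥ ((1 - a * b) • x)) (A *ᵥ ((1 - a * b) • y)) := by
        rw [dH_projAct, mulVec_smul, mulVec_smul, dH_smul (by linarith) (by linarith)]
    _ = dH (A *ᵥ (x - a • y) + a • A *ᵥ (y - b • x))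
          (b • A *ᵥ (x - a • y) + A *ᵥ (y - b • x)) := by
        rw [← mulVec_smul, ← mulVec_smul, ← mulVec_add, ← mulVec_add]
        congr 2 <;> module
    _ ≤ (1 - a * b) / (1 + a * b) * dH (A *ᵥ (x - a • y)) (A *ᵥ (y - b • x)) :=
        dH_add_smul_le (mulVec_nonneg_of_nonneg hA.1 hu) (mulVec_nonneg_of_nonneg hA.1 hv)
          (exists_mulVec_pos hA hu (exists_pos_of_sum_pos hu'))
          (exists_mulVec_pos hA hv (exists_pos_of_sum_pos hv')) ha₀ hb₀ hab.le
    _ ≤ dH x y * contrCoef A :=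
        mul_le_mul_of_nonneg_left (dH_mulVec_le_contrCoef hA.1 hu hu' hv hv')
          (dH_nonneg hx.1 hy.1)
    _ = contrCoef A * dH x y := mul_comm _ _

theorem contrCoef_mul_le (hA : memS A) {B : Matrix (Fin d) (Fin d) ℝ} (hB : memS B) :
    contrCoef (A * B) ≤ contrCoef A * contrCoef B := by
  refine Real.sSup_le ?_ (mul_nonneg (contrCoef_nonneg hA.1) (contrCoef_nonneg hB.1))
  rintro _ ⟨x, y, hx, hsx, hy, hsy, rfl⟩
  rw [projAct_mul, projAct_mul]
  calc _ ≤ contrCoef A * dH (projAct B x) (projAct B y) :=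
        dH_projAct_le_contrCoef_mul hA (projAct_mem_stdSimplex hB ⟨hx, hsx⟩)
          (projAct_mem_stdSimplex hB ⟨hy, hsy⟩)
    _ ≤ contrCoef A * contrCoef B :=
        mul_le_mul_of_nonneg_left (dH_projAct_le_contrCoef hB.1 ⟨hx, hsx⟩ ⟨hy, hsy⟩)
          (contrCoef_nonneg hA.1)

end contrCoef

theorem stmt8_general {d : ℕ} (A B : Matrix (Fin d) (Fin d) ℝ)
    (hA : memS A) (hB : memS B) :
    contrCoef (A * B) ≤ contrCoef A * contrCoef B ∧
      ∀ x y : Fin d → ℝ, (∀ i, 0 ≤ x i) → (∑ i, x i) = 1 →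
        (∀ i, 0 ≤ y i) → (∑ i, y i) = 1 →
        dH (projAct A x) (projAct A y) ≤ contrCoef A * dH x y :=
  ⟨contrCoef_mul_le hA hB, fun _ _ hx hsx hy hsy =>
    dH_projAct_le_contrCoef_mul hA ⟨hx, hsx⟩ ⟨hy, hsy⟩⟩

theorem stmt8 {d : ℕ} (hd : 2 ≤ d) (A B : Matrix (Fin d) (Fin d) ℝ)
    (hA : memS A) (hB : memS B) :
    contrCoef (A * B) ≤ contrCoef A * contrCoef B ∧
      ∀ x y : Fin d → ℝ, (∀ i, 0 ≤ x i) → (∑ i, x i) = 1 →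
        (∀ i, 0 ≤ y i) → (∑ i, y i) = 1 →
        dH (projAct A x) (projAct A y) ≤ contrCoef A * dH x y :=
  stmt8_general A B hA hB
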